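/- arXiv:2102.00873 — 3 statements merged into one kernel-verified Lean document; each statement's English description precedes it below -/
import Mathlib

section
/- Let U(u) > 0 and define Δ(u) = (1−2aτ)² + (m²U(u)² − a²)(4τ² − κ) and ξ₁(u)² = 4(m²U² − a²)/((1+√Δ)² − 4τ²m²U²). Then with B = 1 + (κ/4)ξ₁², the identity m²B²U² = ξ₁² + (aB − τξ₁²)² holds (equivalently, B·U·m = ±√(ξ₁² + (aB − τξ₁²)²)). -/
/-!
Write `s = √Δ` and `D = (1 + s)² - 4τ²m²U²` for the denominator of `ξ₁²`. Since `s² = Δ`, the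
`κ`-terms cancel in `B = 1 + κ(m²U² - a²)/D`, leaving `B = 2(1 + s - 2aτ)/D`. With `B` in this
form the identity `m²U²B² = ξ₁² + (aB - τξ₁²)²` no longer involves `κ` and holds for every value
of `s`: after clearing `D²` both sides agree as polynomials in `s`.
-/

section

variable {K : Type*} [Field K] {κ τ a M s : K}

theorem bour_identity :
    let D := (1 + s) ^ 2 - 4 * τ ^ 2 * M
    let X := 4 * (M - a ^ 2) / D
    let B := 2 * (1 + s - 2 * a * τ) / D
    M * B ^ 2 = X + (a * B - τ * X) ^ 2 := by
  intro D X B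
  rcases eq_or_ne D 0 with hD | hD
  · simp [X, B, hD]
  · simp only [X, B]
    field_simp
    ring

theorem bour_B_eq_of_sq_eq [CharZero K]
    (hs : s ^ 2 = (1 - 2 * a * τ) ^ 2 + (M - a ^ 2) * (4 * τ ^ 2 - κ))
    (hD : (1 + s) ^ 2 - 4 * τ ^ 2 * M ≠ 0) :
    1 + κ / 4 * (4 * (M - a ^ 2) / ((1 + s) ^ 2 - 4 * τ ^ 2 * M))
      = 2 * (1 + s - 2 * a * τ) / ((1 + s) ^ 2 - 4 * τ ^ 2 * M) := by
  rw [eq_div_iff hD, add_mul, mul_assoc (κ / 4), div_mul_cancel₀ _ hD]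
  linear_combination hs

end

theorem bour_key_identity_general (κ τ a m U : ℝ)
    (hΔ : (1 - 2 * a * τ) ^ 2 + (m ^ 2 * U ^ 2 - a ^ 2) * (4 * τ ^ 2 - κ) ≥ 0)
    (hD : (1 + Real.sqrt ((1 - 2 * a * τ) ^ 2
            + (m ^ 2 * U ^ 2 - a ^ 2) * (4 * τ ^ 2 - κ))) ^ 2
          - 4 * τ ^ 2 * m ^ 2 * U ^ 2 > 0) :
    let Δ := (1 - 2 * a * τ) ^ 2 + (m ^ 2 * U ^ 2 - a ^ 2) * (4 * τ ^ 2 - κ)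
    let ξ₁sq := 4 * (m ^ 2 * U ^ 2 - a ^ 2)
        / ((1 + Real.sqrt Δ) ^ 2 - 4 * τ ^ 2 * m ^ 2 * U ^ 2)
    let B := 1 + κ / 4 * ξ₁sq
    m ^ 2 * B ^ 2 * U ^ 2 = ξ₁sq + (a * B - τ * ξ₁sq) ^ 2 := by
  intro Δ ξ₁sq B
  have hDM : (1 + √Δ) ^ 2 - 4 * τ ^ 2 * m ^ 2 * U ^ 2
      = (1 + √Δ) ^ 2 - 4 * τ ^ 2 * (m ^ 2 * U ^ 2) := by ring
  have hD' : (1 + √Δ) ^ 2 - 4 * τ ^ 2 * (m ^ 2 * U ^ 2) ≠ 0 := hDM ▸ hD.ne'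
  simp only [ξ₁sq, B, hDM]
  rw [bour_B_eq_of_sq_eq (Real.sq_sqrt hΔ) hD']
  linear_combination bour_identity (M := m ^ 2 * U ^ 2) (s := √Δ) (a := a) (τ := τ)

/-- with `Δ = (1−2aτ)² + (m²U² − a²)(4τ² − κ)`,
`ξ₁² = 4(m²U² − a²)/((1+√Δ)² − 4τ²m²U²)` and `B = 1 + (κ/4)ξ₁²`, one has the key
algebraic identity `m²B²U² = ξ₁² + (aB − τξ₁²)²` of Bour's theorem in BCV spaces. -/
theorem bour_key_identity (κ τ a m U : ℝ) (hm : m ≠ 0) (hU : U > 0)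
    (hP : m ^ 2 * U ^ 2 - a ^ 2 > 0)
    (hΔ : (1 - 2 * a * τ) ^ 2 + (m ^ 2 * U ^ 2 - a ^ 2) * (4 * τ ^ 2 - κ) ≥ 0)
    (hD : (1 + Real.sqrt ((1 - 2 * a * τ) ^ 2
            + (m ^ 2 * U ^ 2 - a ^ 2) * (4 * τ ^ 2 - κ))) ^ 2
          - 4 * τ ^ 2 * m ^ 2 * U ^ 2 > 0) :
    let Δ := (1 - 2 * a * τ) ^ 2 + (m ^ 2 * U ^ 2 - a ^ 2) * (4 * τ ^ 2 - κ)
    let ξ₁sq := 4 * (m ^ 2 * U ^ 2 - a ^ 2)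
        / ((1 + Real.sqrt Δ) ^ 2 - 4 * τ ^ 2 * m ^ 2 * U ^ 2)
    let B := 1 + κ / 4 * ξ₁sq
    m ^ 2 * B ^ 2 * U ^ 2 = ξ₁sq + (a * B - τ * ξ₁sq) ^ 2 :=
  bour_key_identity_general κ τ a m U hΔ hD
end

section
/- Under the relations ξ₁² = 4(m²U² − a²)/((1+√Δ)² − 4τ²m²U²), Δ = (1−2aτ)² + (m²U² − a²)(4τ² − κ), B = 1 + (κ/4)ξ₁², differentiation of m²B²U² = ξ₁² + (aB − τξ₁²)² with respect to u yields m²B²UU' = √Δ · ξ₁ξ₁'. -/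
/-!
Everything depends on `u` only through `y = U u`, so by the chain rule it suffices to show
`d(ξ₁²)/dy = 2m²y B² / √Δ`, and then `ξ₁ ξ₁' = (ξ₁²)'/2`. Writing `D` for the denominator of
`ξ₁²`, the relation `(√Δ)² = Δ` collapses `D + κ(m²y² − a²)` to `2(1 − 2aτ + √Δ)`, i.e.
`B = 2(1 − 2aτ + √Δ)/D`; the quotient rule for `ξ₁² = 4(m²y² − a²)/D` gives the same expression
once `(√Δ)²` is eliminated again.
-/

namespace Bour

variable (κ τ a m : ℝ)

-- `Δ`, the denominator of `ξ₁²`, and `ξ₁²`, as functions of the value `y` of `U`.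
noncomputable def disc (y : ℝ) : ℝ := (1 - 2 * a * τ) ^ 2 + (m ^ 2 * y ^ 2 - a ^ 2) * (4 * τ ^ 2 - κ)

noncomputable def denom (y : ℝ) : ℝ := (1 + √(disc κ τ a m y)) ^ 2 - 4 * τ ^ 2 * m ^ 2 * y ^ 2

noncomputable def xiSq (y : ℝ) : ℝ := 4 * (m ^ 2 * y ^ 2 - a ^ 2) / denom κ τ a m y

variable {κ τ a m}

theorem sq_sqrt_disc {y : ℝ} (h : 0 < disc κ τ a m y) :
    √(disc κ τ a m y) ^ 2 = (1 - 2 * a * τ) ^ 2 + (m ^ 2 * y ^ 2 - a ^ 2) * (4 * τ ^ 2 - κ) :=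
  Real.sq_sqrt h.le

theorem hasDerivAt_denom {y : ℝ} (h : 0 < disc κ τ a m y) :
    HasDerivAt (denom κ τ a m) (2 * m ^ 2 * y *
      ((1 + √(disc κ τ a m y)) * (4 * τ ^ 2 - κ) / √(disc κ τ a m y) - 4 * τ ^ 2)) y := by
  have hsq : HasDerivAt (fun y => y ^ 2) (2 * y) y := by simpa using hasDerivAt_pow 2 y
  have hdisc : HasDerivAt (disc κ τ a m) (m ^ 2 * (2 * y) * (4 * τ ^ 2 - κ)) y :=
    (((hsq.const_mul (m ^ 2)).sub_const (a ^ 2)).mul_const (4 * τ ^ 2 - κ)).const_add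
      ((1 - 2 * a * τ) ^ 2)
  have hs : √(disc κ τ a m y) ≠ 0 := (Real.sqrt_pos.2 h).ne'
  refine ((((hdisc.sqrt h.ne').const_add 1).fun_pow 2).sub
    (hsq.const_mul (4 * τ ^ 2 * m ^ 2))).congr_deriv ?_
  field_simp
  ring

theorem one_add_mul_xiSq {y : ℝ} (h : 0 < disc κ τ a m y) (hD : denom κ τ a m y ≠ 0) :
    1 + κ / 4 * xiSq κ τ a m y = 2 * (1 - 2 * a * τ + √(disc κ τ a m y)) / denom κ τ a m y := by
  have hs := sq_sqrt_disc h
  unfold xiSq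
  field_simp
  unfold denom
  linear_combination hs

theorem hasDerivAt_xiSq {y : ℝ} (h : 0 < disc κ τ a m y) (hD : denom κ τ a m y ≠ 0) :
    HasDerivAt (xiSq κ τ a m)
      (2 * m ^ 2 * y * (1 + κ / 4 * xiSq κ τ a m y) ^ 2 / √(disc κ τ a m y)) y := by
  have hs := sq_sqrt_disc h
  have hs0 : √(disc κ τ a m y) ≠ 0 := (Real.sqrt_pos.2 h).ne'
  have hsq : HasDerivAt (fun y => y ^ 2) (2 * y) y := by simpa using hasDerivAt_pow 2 y
  refine ((((hsq.const_mul (m ^ 2)).sub_const (a ^ 2)).const_mul 4).div (hasDerivAt_denom h)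
    hD).congr_deriv ?_
  rw [one_add_mul_xiSq h hD]
  field_simp
  unfold denom
  linear_combination (4 * m ^ 2 * y) * (√(disc κ τ a m y) + 1) * hs

end Bour

theorem bour_derivative_identity_general (κ τ a m : ℝ) (U : ℝ → ℝ)
    (hU : Differentiable ℝ U)
    (hP : ∀ u, m ^ 2 * (U u) ^ 2 - a ^ 2 > 0)
    (hΔ : ∀ u, (1 - 2 * a * τ) ^ 2
        + (m ^ 2 * (U u) ^ 2 - a ^ 2) * (4 * τ ^ 2 - κ) > 0)
    (hD : ∀ u, (1 + Real.sqrt ((1 - 2 * a * τ) ^ 2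
            + (m ^ 2 * (U u) ^ 2 - a ^ 2) * (4 * τ ^ 2 - κ))) ^ 2
          - 4 * τ ^ 2 * m ^ 2 * (U u) ^ 2 > 0) :
    ∀ u : ℝ,
      let Δ : ℝ → ℝ := fun v => (1 - 2 * a * τ) ^ 2
          + (m ^ 2 * (U v) ^ 2 - a ^ 2) * (4 * τ ^ 2 - κ)
      let ξ₁ : ℝ → ℝ := fun v => Real.sqrt (4 * (m ^ 2 * (U v) ^ 2 - a ^ 2)
          / ((1 + Real.sqrt (Δ v)) ^ 2 - 4 * τ ^ 2 * m ^ 2 * (U v) ^ 2))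
      let B : ℝ → ℝ := fun v => 1 + κ / 4 * (ξ₁ v) ^ 2
      m ^ 2 * (B u) ^ 2 * U u * deriv U u
        = Real.sqrt (Δ u) * ξ₁ u * deriv ξ₁ u := by
  intro u Δ ξ₁ B
  have hdisc : 0 < Bour.disc κ τ a m (U u) := hΔ u
  have hdenom : 0 < Bour.denom κ τ a m (U u) := hD u
  have hxiSq : 0 < Bour.xiSq κ τ a m (U u) := div_pos (mul_pos four_pos (hP u)) hdenom
  have hξ₁ : HasDerivAt ξ₁ _ u :=
    ((Bour.hasDerivAt_xiSq hdisc hdenom.ne').comp u (hU u).hasDerivAt).sqrt hxiSq.ne'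
  show m ^ 2 * (1 + κ / 4 * √(Bour.xiSq κ τ a m (U u)) ^ 2) ^ 2 * U u * deriv U u
    = √(Bour.disc κ τ a m (U u)) * √(Bour.xiSq κ τ a m (U u)) * deriv ξ₁ u
  have hs : 0 < √(Bour.disc κ τ a m (U u)) := Real.sqrt_pos.2 hdisc
  have hξ : 0 < √(Bour.xiSq κ τ a m (U u)) := Real.sqrt_pos.2 hxiSq
  rw [hξ₁.deriv, Function.comp_apply, Real.sq_sqrt hxiSq.le]
  field_simp

/-- with `Δ(u) = (1−2aτ)² + (m²U(u)² − a²)(4τ² − κ)`,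
`ξ₁(u) = √(4(m²U² − a²)/((1+√Δ)² − 4τ²m²U²))` and `B = 1 + (κ/4)ξ₁²`, differentiating
the identity `m²B²U² = ξ₁² + (aB − τξ₁²)²` gives `m²B²UU' = √Δ · ξ₁ξ₁'`. -/
theorem bour_derivative_identity (κ τ a m : ℝ) (hm : m ≠ 0) (U : ℝ → ℝ)
    (hU : Differentiable ℝ U) (hUpos : ∀ u, U u > 0)
    (hP : ∀ u, m ^ 2 * (U u) ^ 2 - a ^ 2 > 0)
    (hΔ : ∀ u, (1 - 2 * a * τ) ^ 2
        + (m ^ 2 * (U u) ^ 2 - a ^ 2) * (4 * τ ^ 2 - κ) > 0)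
    (hD : ∀ u, (1 + Real.sqrt ((1 - 2 * a * τ) ^ 2
            + (m ^ 2 * (U u) ^ 2 - a ^ 2) * (4 * τ ^ 2 - κ))) ^ 2
          - 4 * τ ^ 2 * m ^ 2 * (U u) ^ 2 > 0) :
    ∀ u : ℝ,
      let Δ : ℝ → ℝ := fun v => (1 - 2 * a * τ) ^ 2
          + (m ^ 2 * (U v) ^ 2 - a ^ 2) * (4 * τ ^ 2 - κ)
      let ξ₁ : ℝ → ℝ := fun v => Real.sqrt (4 * (m ^ 2 * (U v) ^ 2 - a ^ 2)
          / ((1 + Real.sqrt (Δ v)) ^ 2 - 4 * τ ^ 2 * m ^ 2 * (U v) ^ 2))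
      let B : ℝ → ℝ := fun v => 1 + κ / 4 * (ξ₁ v) ^ 2
      m ^ 2 * (B u) ^ 2 * U u * deriv U u
        = Real.sqrt (Δ u) * ξ₁ u * deriv ξ₁ u :=
  bour_derivative_identity_general κ τ a m U hU hP hΔ hD
end

section
/- The mean curvature of a helicoidal surface in the BCV space, computed via the reduction theorem, satisfies H = σ' + (1/ξ₁ − (κ/4)ξ₁)·sin σ, where σ is the angle the arc-length-parametrized profile curve makes with the ∂/∂ξ₁ direction; in particular the normal derivative term is D_n ln ω = (4ξ₁[8aτ − 4 + ξ₁²(κ + 2aκτ − 8τ²)] sin σ)/(16ξ₁² + [a(4+κξ₁²) − 4τξ₁²]²). -/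
/-!
Write `B' = (κ/2) ξ₁` and `Q = ξ₁² + (aB − τξ₁²)²`. Since `ln ω = ½ ln Q − ln B`,
`D_n ln ω = −B (Q'/(2Q) − B'/B) sin σ = (B' − B Q'/(2Q)) sin σ`, while `g̃₂₂ = ξ₁²/Q` makes the
first term of `k_g` equal to `(B/ξ₁ − B Q'/(2Q)) sin σ`. The `Q'` terms cancel in
`k_g − D_n ln ω`, leaving `(B/ξ₁ − B') sin σ = (1/ξ₁ − (κ/4)ξ₁) sin σ`, whatever `a` and `τ` are.
-/

open Real

theorem deriv_log_sqrt_div {f g : ℝ → ℝ} {f' g' x : ℝ} (hf : HasDerivAt f f' x)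
    (hg : HasDerivAt g g' x) (hfx : 0 < f x) (hgx : g x ≠ 0) :
    deriv (fun s => log (√(f s) / g s)) x = f' / (2 * f x) - g' / g x := by
  have hsqrt : √(f x) ≠ 0 := (sqrt_pos.mpr hfx).ne'
  have h : HasDerivAt (fun s => log (√(f s) / g s)) _ x :=
    ((hf.sqrt hfx.ne').div hg hgx).log (div_ne_zero hsqrt hgx)
  rw [h.deriv, Pi.div_apply]
  field_simp
  rw [sq_sqrt hfx.le]
  ring

theorem deriv_sq_div {f : ℝ → ℝ} {f' x : ℝ} (hf : HasDerivAt f f' x) (hfx : f x ≠ 0) :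
    deriv (fun s => s ^ 2 / f s) x = (2 * x * f x - x ^ 2 * f') / f x ^ 2 := by
  have h : HasDerivAt (fun s => s ^ 2 / f s) _ x := (hasDerivAt_pow 2 x).div hf hfx
  rw [h.deriv]
  push_cast
  ring

section Helicoidal

variable (κ τ a : ℝ)

noncomputable def bcvConformalFactor (s : ℝ) : ℝ := 1 + κ / 4 * s ^ 2

noncomputable def orbitNormSq (s : ℝ) : ℝ :=
  s ^ 2 + (a * bcvConformalFactor κ s - τ * s ^ 2) ^ 2

noncomputable def orbitNormSqDeriv (s : ℝ) : ℝ :=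
  2 * s + 2 * (a * bcvConformalFactor κ s - τ * s ^ 2) * (a * (κ / 2 * s) - 2 * τ * s)

theorem hasDerivAt_bcvConformalFactor (s : ℝ) :
    HasDerivAt (bcvConformalFactor κ) (κ / 2 * s) s := by
  have h : HasDerivAt (fun s => 1 + κ / 4 * s ^ 2) _ s :=
    ((hasDerivAt_pow 2 s).const_mul (κ / 4)).const_add 1
  exact h.congr_deriv (by push_cast; ring)

theorem hasDerivAt_orbitNormSq (s : ℝ) :
    HasDerivAt (orbitNormSq κ τ a) (orbitNormSqDeriv κ τ a s) s := by
  have hinner := ((hasDerivAt_bcvConformalFactor κ s).const_mul a).sub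
    ((hasDerivAt_pow 2 s).const_mul τ)
  have h : HasDerivAt (orbitNormSq κ τ a) _ s := (hasDerivAt_pow 2 s).add (hinner.pow 2)
  exact h.congr_deriv (by rw [Pi.sub_apply]; unfold orbitNormSqDeriv; push_cast; ring)

theorem orbitNormSq_pos {s : ℝ} (hs : s ≠ 0) : 0 < orbitNormSq κ τ a s := by
  unfold orbitNormSq
  positivity

theorem neg_bcvConformalFactor_mul_logDeriv_volume {s : ℝ} (hB : bcvConformalFactor κ s ≠ 0)
    (hs : s ≠ 0) :
    -bcvConformalFactor κ s * (orbitNormSqDeriv κ τ a s / (2 * orbitNormSq κ τ a s)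
      - κ / 2 * s / bcvConformalFactor κ s) =
    4 * s * (8 * a * τ - 4 + s ^ 2 * (κ + 2 * a * κ * τ - 8 * τ ^ 2))
      / (16 * s ^ 2 + (a * (4 + κ * s ^ 2) - 4 * τ * s ^ 2) ^ 2) := by
  have hQ := (orbitNormSq_pos κ τ a hs).ne'
  have hden : 16 * s ^ 2 + (a * (4 + κ * s ^ 2) - 4 * τ * s ^ 2) ^ 2 =
      16 * orbitNormSq κ τ a s := by
    unfold orbitNormSq bcvConformalFactor
    ring
  rw [hden]
  field_simp
  unfold orbitNormSqDeriv orbitNormSq bcvConformalFactor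
  ring

theorem geodesicTerm_add_bcvConformalFactor_mul_logDeriv {s Q Q' : ℝ} (hs : s ≠ 0) (hQ : Q ≠ 0)
    (hB : bcvConformalFactor κ s ≠ 0) :
    bcvConformalFactor κ s * Q * ((2 * s * Q - s ^ 2 * Q') / Q ^ 2) / (2 * s ^ 2)
      + bcvConformalFactor κ s * (Q' / (2 * Q) - κ / 2 * s / bcvConformalFactor κ s) =
    1 / s - κ / 4 * s := by
  field_simp
  unfold bcvConformalFactor
  ring

end Helicoidal

/-- via the reduction theorem, the mean curvature of a helicoidal
surface in the BCV space satisfies `H = σ' + (1/ξ₁ − (κ/4)ξ₁)·sin σ`. Here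
`ω = √(ξ₁² + (aB − τξ₁²)²)/B` (with `B = 1 + (κ/4)ξ₁²`) is the volume function of
the principal orbit, the unit normal of the profile curve is
`n = (−B sin σ, √(ξ₁²+(aB−τξ₁²)²) cos σ/ξ₁)`, so that
`D_n ln ω = −B sin σ · (ln ω)'(ξ₁)`, `k_g` is the geodesic curvature of the profile
curve given by `k_g = B[ξ₁²+(aB−τξ₁²)²](g̃₂₂)_{ξ₁} sin σ/(2ξ₁²) + σ'` with
`g̃₂₂ = ξ₁²/(ξ₁²+(aB−τξ₁²)²)`, and `H = k_g − D_n ln ω`. In particular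
`D_n ln ω = 4ξ₁[8aτ − 4 + ξ₁²(κ + 2aκτ − 8τ²)] sin σ /(16ξ₁² + [a(4+κξ₁²) − 4τξ₁²]²)`. -/
theorem helicoidal_mean_curvature (κ τ a : ℝ) (ξ₁ σ σ' : ℝ) (hξ : ξ₁ > 0)
    (hB : 1 + κ / 4 * ξ₁ ^ 2 > 0) :
    let B : ℝ → ℝ := fun s => 1 + κ / 4 * s ^ 2
    let Q : ℝ → ℝ := fun s => s ^ 2 + (a * B s - τ * s ^ 2) ^ 2
    let ω : ℝ → ℝ := fun s => Real.sqrt (Q s) / B s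
    let g22 : ℝ → ℝ := fun s => s ^ 2 / Q s
    let Dnlnω := (-(B ξ₁) * Real.sin σ) * deriv (fun s => Real.log (ω s)) ξ₁
    let kg := B ξ₁ * Q ξ₁ * deriv g22 ξ₁ / (2 * ξ₁ ^ 2) * Real.sin σ + σ'
    Dnlnω = 4 * ξ₁ * (8 * a * τ - 4
          + ξ₁ ^ 2 * (κ + 2 * a * κ * τ - 8 * τ ^ 2)) * Real.sin σ
        / (16 * ξ₁ ^ 2 + (a * (4 + κ * ξ₁ ^ 2) - 4 * τ * ξ₁ ^ 2) ^ 2)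
    ∧ kg - Dnlnω = σ' + (1 / ξ₁ - κ / 4 * ξ₁) * Real.sin σ := by
  intro B Q ω g22 Dnlnω kg
  have hξ0 : ξ₁ ≠ 0 := hξ.ne'
  have hB0 : bcvConformalFactor κ ξ₁ ≠ 0 := hB.ne'
  have hQpos : 0 < orbitNormSq κ τ a ξ₁ := orbitNormSq_pos κ τ a hξ0
  have hQ := hasDerivAt_orbitNormSq κ τ a ξ₁
  have hlog : deriv (fun s => log (ω s)) ξ₁ = orbitNormSqDeriv κ τ a ξ₁ /
      (2 * orbitNormSq κ τ a ξ₁) - κ / 2 * ξ₁ / bcvConformalFactor κ ξ₁ :=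
    deriv_log_sqrt_div hQ (hasDerivAt_bcvConformalFactor κ ξ₁) hQpos hB0
  have hg22 : deriv g22 ξ₁ = (2 * ξ₁ * orbitNormSq κ τ a ξ₁
      - ξ₁ ^ 2 * orbitNormSqDeriv κ τ a ξ₁) / orbitNormSq κ τ a ξ₁ ^ 2 :=
    deriv_sq_div hQ hQpos.ne'
  constructor
  · show -bcvConformalFactor κ ξ₁ * sin σ * deriv (fun s => log (ω s)) ξ₁ = _
    rw [hlog]
    linear_combination sin σ * neg_bcvConformalFactor_mul_logDeriv_volume κ τ a hB0 hξ0
  · show bcvConformalFactor κ ξ₁ * orbitNormSq κ τ a ξ₁ * deriv g22 ξ₁ / (2 * ξ₁ ^ 2) * sin σ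
      + σ' - -bcvConformalFactor κ ξ₁ * sin σ * deriv (fun s => log (ω s)) ξ₁ = _
    rw [hlog, hg22]
    linear_combination sin σ * geodesicTerm_add_bcvConformalFactor_mul_logDeriv κ
      (Q' := orbitNormSqDeriv κ τ a ξ₁) hξ0 hQpos.ne' hB0
end
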